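/- arXiv:2603.13147 — 9 statements merged into one kernel-verified Lean document; each statement's English description precedes it below -/
import Mathlib

section
/- Let B be a predicate on L = (Fin n → ℝ≥0) and let G : L be a lower bound of all feasible states, i.e. every H with B H satisfies G ≤ H. If the index j is α-forbidden in G, then the advanced state Function.update G j α is still a lower bound of all feasible states: every H with B H satisfies Function.update G j α ≤ H. (In particular, the LLP advance step preserves the algorithm's lower-bound invariant.) -/
open scoped NNReal

def AlphaForbidden {n : ℕ} (B : (Fin n → ℝ≥0) → Prop) (G : Fin n → ℝ≥0) (j : Fin n)
    (α : ℝ≥0) : Prop :=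
  ∀ H : Fin n → ℝ≥0, G ≤ H → H j < α → ¬ B H

theorem stmt4_general (n : ℕ) (B : (Fin n → ℝ≥0) → Prop) (G : Fin n → ℝ≥0) (j : Fin n)
    (α : ℝ≥0)
    (hlb : ∀ H : Fin n → ℝ≥0, B H → G ≤ H)
    (hforb : AlphaForbidden B G j α) :
    ∀ H : Fin n → ℝ≥0, B H → Function.update G j α ≤ H := by
  intro H hB
  have hGH : G ≤ H := hlb H hB
  have hαH : α ≤ H j := not_lt.1 fun hlt => hforb H hGH hlt hB
  exact update_le_iff.2 ⟨hαH, fun i _ => hGH i⟩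

theorem stmt4 (n : ℕ) (B : (Fin n → ℝ≥0) → Prop) (G : Fin n → ℝ≥0) (j : Fin n)
    (α : ℝ≥0) (hα : G j < α)
    (hlb : ∀ H : Fin n → ℝ≥0, B H → G ≤ H)
    (hforb : AlphaForbidden B G j α) :
    ∀ H : Fin n → ℝ≥0, B H → Function.update G j α ≤ H :=
  stmt4_general n B G j α hlb hforb
end

section
/- Let B be a predicate on L = (Fin n → ℝ≥0), let T : L be an upper-bound vector, and let G : L be a lower bound of all feasible states (every H with B H satisfies G ≤ H). If the index j is α-forbidden in G and T j < α, then there is no H : L with H ≤ T and B H; that is, the LLP algorithm correctly reports infeasibility when a required advance exceeds the bound T. -/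
open scoped NNReal

theorem AlphaForbidden.le_apply_of_le {n : ℕ} {B : (Fin n → ℝ≥0) → Prop}
    {G H : Fin n → ℝ≥0} {j : Fin n} {α : ℝ≥0} (hforb : AlphaForbidden B G j α)
    (hGH : G ≤ H) (hB : B H) : α ≤ H j :=
  not_lt.mp fun hlt => hforb H hGH hlt hB

theorem stmt5_general (n : ℕ) (B : (Fin n → ℝ≥0) → Prop) (T G : Fin n → ℝ≥0) (j : Fin n)
    (α : ℝ≥0)
    (hlb : ∀ H : Fin n → ℝ≥0, B H → G ≤ H)
    (hforb : AlphaForbidden B G j α)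
    (hT : T j < α) :
    ¬ ∃ H : Fin n → ℝ≥0, H ≤ T ∧ B H := by
  rintro ⟨H, hHT, hB⟩
  exact (hforb.le_apply_of_le (hlb H hB) hB).not_gt ((hHT j).trans_lt hT)

theorem stmt5 (n : ℕ) (B : (Fin n → ℝ≥0) → Prop) (T G : Fin n → ℝ≥0) (j : Fin n)
    (α : ℝ≥0) (hα : G j < α)
    (hlb : ∀ H : Fin n → ℝ≥0, B H → G ≤ H)
    (hforb : AlphaForbidden B G j α)
    (hT : T j < α) :
    ¬ ∃ H : Fin n → ℝ≥0, H ≤ T ∧ B H :=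
  stmt5_general n B T G j α hlb hforb hT
end

section
/- Let B be a lattice-linear predicate on the lattice Fin n → ℕ (pointwise order). If there exists some H with B H, then the set {H | B H} has a least element; that is, the minimum feasible state sought by the LLP algorithm exists and is unique. -/
/-!
The least feasible state is the pointwise infimum `M` of all feasible states. Since `ℕ` is
well-ordered, each coordinate `M j` is attained by some feasible `H ≥ M`, so no index `j` can be
forbidden in `M`; by lattice-linearity `M` is itself feasible.
-/

/-- `j` is forbidden in `G` with respect to `B`. -/
def Forbidden {n : ℕ} (B : (Fin n → ℕ) → Prop) (G : Fin n → ℕ) (j : Fin n) : Prop :=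
  ∀ H : Fin n → ℕ, G ≤ H → H j = G j → ¬ B H

/-- `B` is lattice-linear. -/
def LatticeLinear {n : ℕ} (B : (Fin n → ℕ) → Prop) : Prop :=
  ∀ G : Fin n → ℕ, ¬ B G → ∃ j : Fin n, Forbidden B G j

theorem exists_mem_apply_eq_sInf_apply {ι α : Type*} [ConditionallyCompleteLinearOrder α]
    [WellFoundedLT α] {S : Set (ι → α)} (hS : S.Nonempty) (j : ι) :
    ∃ H ∈ S, H j = sInf S j := by
  have := hS.to_subtype
  obtain ⟨⟨H, hH⟩, hHj⟩ := ciInf_mem fun H : S => (H : ι → α) j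
  exact ⟨H, hH, hHj.trans sInf_apply.symm⟩

theorem LatticeLinear.of_mem_lowerBounds {n : ℕ} {B : (Fin n → ℕ) → Prop} (hLL : LatticeLinear B)
    {G : Fin n → ℕ} (hG : G ∈ lowerBounds {H | B H})
    (hattained : ∀ j, ∃ H, B H ∧ H j = G j) : B G := by
  by_contra hnB
  obtain ⟨j, hj⟩ := hLL G hnB
  obtain ⟨H, hH, hHj⟩ := hattained j
  exact hj H (hG hH) hHj hH

theorem stmt7 (n : ℕ) (B : (Fin n → ℕ) → Prop) (hLL : LatticeLinear B)
    (hex : ∃ H : Fin n → ℕ, B H) :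
    ∃ G : Fin n → ℕ, IsLeast {H : Fin n → ℕ | B H} G := by
  have hlower : sInf {H | B H} ∈ lowerBounds {H | B H} :=
    fun _ hH => csInf_le (OrderBot.bddBelow _) hH
  exact ⟨sInf {H | B H}, hLL.of_mem_lowerBounds hlower (exists_mem_apply_eq_sInf_apply hex),
    hlower⟩
end

section
/- Let E : Fin n → Fin n → Prop be the edge relation of a directed graph and w : Fin n → Fin n → ℝ≥0 its nonnegative edge weights. Define the SSSP feasibility predicate on states G : Fin n → ℝ≥0∞ (extended nonnegative reals, ordered pointwise) by B G ↔ ∀ u v, E u v → G v ≤ G u + w u v. Then B is lattice-linear with respect to the reverse (dual) pointwise order: for every G with ¬B G there exists a vertex v such that for every H with H ≤ G (pointwise) and H v = G v, B H is false. (This is the forbiddenness structure underlying the LLP formulation of Single-Source Shortest Paths, where distance estimates start at ∞ and only decrease.) -/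
open scoped NNReal ENNReal

theorem stmt10 (n : ℕ) (E : Fin n → Fin n → Prop) (w : Fin n → Fin n → ℝ≥0) :
    ∀ G : Fin n → ℝ≥0∞, ¬ (∀ u v, E u v → G v ≤ G u + (w u v : ℝ≥0∞)) →
      ∃ v : Fin n, ∀ H : Fin n → ℝ≥0∞, H ≤ G → H v = G v →
        ¬ (∀ u v', E u v' → H v' ≤ H u + (w u v' : ℝ≥0∞)) := by
  intro G hG
  obtain ⟨u, v, huv, hviolated⟩ : ∃ u v, E u v ∧ G u + w u v < G v := by simpa using hG
  -- Lowering `G` away from `v` can only lower the tail `u`, so the edge `u → v` stays violated.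
  refine ⟨v, fun H hHG hHv hH => (hH u v huv).not_gt ?_⟩
  calc H u + w u v ≤ G u + w u v := add_le_add_left (hHG u) _
    _ < G v := hviolated
    _ = H v := hHv.symm
end

section
/- Let P : Fin n → Finset (Fin n) assign each job its set of prerequisite jobs and t : Fin n → ℕ its processing time. Define the job-scheduling feasibility predicate on states G : Fin n → ℕ (pointwise order) by B G ↔ ∀ j, (P j).sup G + t j ≤ G j, where (P j).sup G is the maximum of G over P j (0 if P j is empty). Then B is lattice-linear: for every G with ¬B G there exists a job j such that for every H with G ≤ H (pointwise) and H j = G j, B H is false. -/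
theorem exists_forbidden_of_monotone {ι α : Type*} [Preorder α] (f : ι → (ι → α) → α)
    (hf : ∀ j, Monotone (f j)) (G : ι → α) (hG : ¬ ∀ j, f j G ≤ G j) :
    ∃ j, ∀ H : ι → α, G ≤ H → H j = G j → ¬ ∀ j', f j' H ≤ H j' := by
  obtain ⟨j, hj⟩ := not_forall.mp hG
  refine ⟨j, fun H hGH hHj hH => hj ?_⟩
  calc f j G ≤ f j H := hf j hGH
    _ ≤ H j := hH j
    _ = G j := hHj

theorem monotone_finset_sup_add {ι : Type*} (s : Finset ι) (c : ℕ) :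
    Monotone fun G : ι → ℕ => s.sup G + c :=
  fun _ _ hGH => Nat.add_le_add_right (Finset.sup_mono_fun fun i _ => hGH i) c

theorem stmt11 (n : ℕ) (P : Fin n → Finset (Fin n)) (t : Fin n → ℕ) :
    ∀ G : Fin n → ℕ, ¬ (∀ j, (P j).sup G + t j ≤ G j) →
      ∃ j : Fin n, ∀ H : Fin n → ℕ, G ≤ H → H j = G j →
        ¬ (∀ j', (P j').sup H + t j' ≤ H j') :=
  exists_forbidden_of_monotone (fun j G => (P j).sup G + t j)
    fun j => monotone_finset_sup_add (P j) (t j)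
end

section
/- Let N, C : ℕ, let wt : Fin N → ℕ and val : Fin N → ℕ be item weights and values. Consider states G : Fin (N+1) → Fin (C+1) → ℕ (dynamic-programming tables ordered pointwise, with index set the pairs (k, c)). Define the knapsack feasibility predicate B G ↔ for every item k : Fin N and capacity c : Fin (C+1): G k.castSucc c ≤ G k.succ c, and whenever wt k ≤ c, also val k + G k.castSucc (the capacity c - wt k) ≤ G k.succ c. Then B is lattice-linear: for every G with ¬B G there exists a table cell (k, c) such that for every H ≥ G (pointwise) agreeing with G at (k, c), B H is false. -/
/-- The knapsack DP feasibility predicate on tables `G : Fin (N+1) → Fin (C+1) → ℕ`: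
each entry for item `k.succ` dominates the skip option and, when the item fits,
the take option. -/
def KnapFeasible {N C : ℕ} (wt val : Fin N → ℕ) (G : Fin (N + 1) → Fin (C + 1) → ℕ) : Prop :=
  ∀ (k : Fin N) (c : Fin (C + 1)),
    G k.castSucc c ≤ G k.succ c ∧
    ∀ _ : wt k ≤ (c : ℕ),
      val k + G k.castSucc ⟨(c : ℕ) - wt k, lt_of_le_of_lt (Nat.sub_le _ _) c.isLt⟩
        ≤ G k.succ c

/-! Each constraint of `KnapFeasible` reads `f G ≤ G k.succ c` with `f` monotone in `G`, so a
violated constraint stays violated in every larger table that keeps the cell `(k.succ, c)`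
fixed: that cell is forbidden. -/

theorem not_le_of_monotone_of_le {S β : Type*} [Preorder S] [Preorder β] {f : S → β}
    (g : S → β) {G H : S} (hGH : G ≤ H) (hf : Monotone f) (hg : g H = g G)
    (hG : ¬ f G ≤ g G) : ¬ f H ≤ g H :=
  fun hH => hG ((hf hGH).trans (hg ▸ hH))

theorem stmt12 (N C : ℕ) (wt val : Fin N → ℕ) :
    ∀ G : Fin (N + 1) → Fin (C + 1) → ℕ, ¬ KnapFeasible wt val G →
      ∃ (k : Fin (N + 1)) (c : Fin (C + 1)),
        ∀ H : Fin (N + 1) → Fin (C + 1) → ℕ, G ≤ H → H k c = G k c →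
          ¬ KnapFeasible wt val H := by
  intro G hG
  simp only [KnapFeasible, not_forall, not_and_or] at hG
  obtain ⟨k, c, hviolated⟩ := hG
  refine ⟨k.succ, c, fun H hGH hcell hH => ?_⟩
  obtain ⟨hskip, htake⟩ := hH k c
  rcases hviolated with hskipG | ⟨hfits, htakeG⟩
  · exact not_le_of_monotone_of_le (fun H => H k.succ c) hGH
      (fun _ _ h => h k.castSucc c) hcell hskipG hskip
  · exact not_le_of_monotone_of_le (fun H => H k.succ c) hGH
      (fun _ _ h => Nat.add_le_add_left (h k.castSucc _) (val k)) hcell htakeG (htake hfits)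
end

section
/- Let E : Fin n → Fin n → Prop be the edge relation of a directed graph. Consider states G : Fin n → Fin n → Prop ordered pointwise by implication (G ≤ H iff ∀ u v, G u v → H u v). Define the transitive-closure feasibility predicate B G ↔ (∀ u v, E u v → G u v) ∧ (∀ u x v, G u x → G x v → G u v). Then B is lattice-linear: for every G with ¬B G there exists a pair (u, v) such that for every H with G ≤ H and (H u v ↔ G u v), B H is false. -/
/-! A pair missing from `G` that is an edge, or closes a two-step path of `G`, must be present in
every feasible state above `G`; flipping only that pair can therefore never reach feasibility. -/

/-- Transitive-closure feasibility: `G` contains all edges of `E` and is transitive. -/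
def TCFeasible {n : ℕ} (E : Fin n → Fin n → Prop) (G : Fin n → Fin n → Prop) : Prop :=
  (∀ u v, E u v → G u v) ∧ (∀ u x v, G u x → G x v → G u v)

namespace TCFeasible

variable {n : ℕ} {E G H : Fin n → Fin n → Prop}

theorem exists_not_rel_of_not (hG : ¬TCFeasible E G) :
    ∃ u v, ¬G u v ∧ (E u v ∨ ∃ x, G u x ∧ G x v) := by
  unfold TCFeasible at hG
  by_contra! hall
  refine hG ⟨fun u v huv => ?_, fun u x v hux hxv => ?_⟩
  · by_contra h
    exact (hall u v h).1 huv
  · by_contra h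
    exact (hall u v h).2 x hux hxv

theorem rel_of_edge_or_path (hH : TCFeasible E H) (hGH : ∀ a b, G a b → H a b) {u v : Fin n}
    (h : E u v ∨ ∃ x, G u x ∧ G x v) : H u v := by
  rcases h with hE | ⟨x, hux, hxv⟩
  · exact hH.1 u v hE
  · exact hH.2 u x v (hGH u x hux) (hGH x v hxv)

end TCFeasible

theorem stmt13 (n : ℕ) (E : Fin n → Fin n → Prop) :
    ∀ G : Fin n → Fin n → Prop, ¬ TCFeasible E G →
      ∃ u v : Fin n, ∀ H : Fin n → Fin n → Prop,
        (∀ a b, G a b → H a b) → (H u v ↔ G u v) → ¬ TCFeasible E H := by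
  intro G hG
  obtain ⟨u, v, hGuv, hforced⟩ := TCFeasible.exists_not_rel_of_not hG
  exact ⟨u, v, fun H hGH huv hH => hGuv (huv.mp (hH.rel_of_edge_or_path hGH hforced))⟩
end

section
/- Consider a stable marriage instance with n men and n women, where mpref : Fin n → Fin n → Fin n gives each man's preference list (mpref m j is the woman in position j of man m's list) and wrank : Fin n → Fin n → ℕ gives each woman's ranking of the men (lower rank preferred). States are proposal-index vectors G : Fin n → Fin n ordered pointwise. Say man m is blocked in G if, letting w = mpref m (G m), there exist m' ≠ m and j ≤ G m' with mpref m' j = w and wrank w m' < wrank w m. Define B G ↔ no man is blocked in G. Then B is lattice-linear: for every G with ¬B G there exists a man m such that for every H with G ≤ H (pointwise) and H m = G m, B H is false. -/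
/-- Man `m` is blocked in the proposal-index state `G`: letting `w` be the woman
he currently targets, some other man `m'` also targets `w` (at some position
`j ≤ G m'` of his list) and `w` strictly prefers `m'` to `m`. -/
def Blocked {n : ℕ} (mpref : Fin n → Fin n → Fin n) (wrank : Fin n → Fin n → ℕ)
    (G : Fin n → Fin n) (m : Fin n) : Prop :=
  ∃ m' : Fin n, m' ≠ m ∧ ∃ j : Fin n, j ≤ G m' ∧
    mpref m' j = mpref m (G m) ∧
    wrank (mpref m (G m)) m' < wrank (mpref m (G m)) m

theorem Blocked.mono {n : ℕ} {mpref : Fin n → Fin n → Fin n} {wrank : Fin n → Fin n → ℕ}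
    {G H : Fin n → Fin n} {m : Fin n} (hG : Blocked mpref wrank G m) (hGH : G ≤ H)
    (hm : H m = G m) : Blocked mpref wrank H m := by
  obtain ⟨m', hne, j, hj, hpref, hrank⟩ := hG
  exact ⟨m', hne, j, hj.trans (hGH m'), hm ▸ hpref, hm ▸ hrank⟩

theorem stmt14 (n : ℕ) (mpref : Fin n → Fin n → Fin n) (wrank : Fin n → Fin n → ℕ) :
    ∀ G : Fin n → Fin n, ¬ (∀ m : Fin n, ¬ Blocked mpref wrank G m) →
      ∃ m : Fin n, ∀ H : Fin n → Fin n, G ≤ H → H m = G m →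
        ¬ (∀ m0 : Fin n, ¬ Blocked mpref wrank H m0) := by
  intro G hG
  obtain ⟨m, hm⟩ := not_forall_not.mp hG
  exact ⟨m, fun H hGH hHm hH => hH m (hm.mono hGH hHm)⟩
end

section
/- Let w : Fin n → Fin n → ℝ≥0∞ be edge weights of a directed graph on Fin n (with w u v = ∞ encoding the absence of an edge) and fix a source s : Fin n. For v : Fin n define the shortest-path distance d v as the infimum, over all k : ℕ and all walks p : Fin (k+1) → Fin n with p 0 = s and p k = v, of the total weight ∑_{i<k} w (p i) (p (i+1)). Then d is the greatest element of the set {G : Fin n → ℝ≥0∞ | G s = 0 ∧ ∀ u v, G v ≤ G u + w u v}; that is, the shortest-path distances are exactly the extremal fixed point of the relaxation constraints that the LLP-SSSP solver converges to. -/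
open scoped ENNReal

/-!
The distance function satisfies the relaxation constraints because appending an edge to a walk
to `u` gives a walk to `v`. Conversely, summing the constraints along any walk from `s` shows
that a feasible `G` with `G s = 0` is bounded by the weight of every walk, hence by the infimum.
-/

section WalkWeight

variable {α M : Type*} [AddCommMonoid M] (w : α → α → M)

def walkWeight {k : ℕ} (p : Fin (k + 1) → α) : M :=
  ∑ i : Fin k, w (p i.castSucc) (p i.succ)

theorem walkWeight_zero (p : Fin 1 → α) : walkWeight w p = 0 := by
  simp [walkWeight]

theorem walkWeight_succ {k : ℕ} (p : Fin (k + 2) → α) :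
    walkWeight w p = walkWeight w (Fin.init p) + w (p (Fin.last k).castSucc) (p (Fin.last (k + 1))) :=
  Fin.sum_univ_castSucc _

theorem walkWeight_snoc {k : ℕ} (p : Fin (k + 1) → α) (v : α) :
    walkWeight w (Fin.snoc p v : Fin (k + 2) → α) = walkWeight w p + w (p (Fin.last k)) v := by
  rw [walkWeight_succ, Fin.init_snoc, Fin.snoc_castSucc, Fin.snoc_last]

theorem le_add_walkWeight [PartialOrder M] [IsOrderedAddMonoid M] {G : α → M}
    (hG : ∀ u v, G v ≤ G u + w u v) {k : ℕ} (p : Fin (k + 1) → α) :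
    G (p (Fin.last k)) ≤ G (p 0) + walkWeight w p := by
  induction k with
  | zero => simp [walkWeight_zero, Fin.last_zero]
  | succ k ih =>
    calc G (p (Fin.last (k + 1)))
        ≤ G (p (Fin.last k).castSucc) + w (p (Fin.last k).castSucc) (p (Fin.last (k + 1))) :=
          hG _ _
      _ ≤ G (p 0) + walkWeight w (Fin.init p)
            + w (p (Fin.last k).castSucc) (p (Fin.last (k + 1))) := by
          gcongr
          exact ih (Fin.init p)
      _ = G (p 0) + walkWeight w p := by rw [walkWeight_succ, add_assoc]

end WalkWeight

section WalkDist

variable {α : Type*} (w : α → α → ℝ≥0∞) (s : α)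

noncomputable def walkDist (v : α) : ℝ≥0∞ :=
  ⨅ (k : ℕ) (p : Fin (k + 1) → α) (_ : p 0 = s) (_ : p (Fin.last k) = v), walkWeight w p

variable {w s}

theorem walkDist_le {v : α} {k : ℕ} (p : Fin (k + 1) → α) (h0 : p 0 = s)
    (hv : p (Fin.last k) = v) : walkDist w s v ≤ walkWeight w p :=
  iInf_le_of_le k <| iInf_le_of_le p <| iInf_le_of_le h0 <| iInf_le _ hv

variable (w s)

theorem walkDist_self : walkDist w s s = 0 :=
  nonpos_iff_eq_zero.mp <| (walkDist_le (fun _ => s) rfl rfl).trans_eq (walkWeight_zero w _)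

theorem walkDist_le_add (u v : α) : walkDist w s v ≤ walkDist w s u + w u v := by
  simp only [walkDist, ENNReal.iInf_add]
  refine le_iInf fun k => le_iInf fun p => le_iInf fun h0 => le_iInf fun hu => ?_
  have h0' : (Fin.snoc p v : Fin (k + 2) → α) 0 = s := by
    rw [← Fin.castSucc_zero, Fin.snoc_castSucc, h0]
  calc walkDist w s v ≤ walkWeight w (Fin.snoc p v : Fin (k + 2) → α) :=
        walkDist_le _ h0' (Fin.snoc_last _ _)
    _ = walkWeight w p + w u v := by rw [walkWeight_snoc, hu]

theorem le_walkDist_of_relaxed {G : α → ℝ≥0∞} (hs : G s = 0)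
    (hG : ∀ u v, G v ≤ G u + w u v) (v : α) : G v ≤ walkDist w s v :=
  le_iInf fun k => le_iInf fun p => le_iInf fun h0 => le_iInf fun hv => by
    simpa [h0, hv, hs] using le_add_walkWeight w hG p

end WalkDist

theorem stmt16 (n : ℕ) (w : Fin n → Fin n → ℝ≥0∞) (s : Fin n) :
    IsGreatest {G : Fin n → ℝ≥0∞ | G s = 0 ∧ ∀ u v, G v ≤ G u + w u v}
      (fun v : Fin n =>
        ⨅ (k : ℕ) (p : Fin (k + 1) → Fin n) (_ : p 0 = s) (_ : p (Fin.last k) = v),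
          ∑ i : Fin k, w (p i.castSucc) (p i.succ)) :=
  ⟨⟨walkDist_self w s, walkDist_le_add w s⟩,
    fun _ ⟨hs, hG⟩ => le_walkDist_of_relaxed w s hs hG⟩
end
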